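/- arXiv:1609.09415 — 3 statements merged into one kernel-verified Lean document; each statement's English description precedes it below -/
import Mathlib

section
/- Let H be a real Hilbert space and let I : H → ℝ be a C¹ functional with I(0) = 0. Define J : H → ℝ by J(u) = (1/2)‖u‖² − I(u) and let N = {u ∈ H \ {0} : J'(u)(u) = 0} be the Nehari manifold. Assume: (J1) there is r > 0 such that inf_{‖u‖ = r} J(u) > 0 = J(0); (J2) there is q ≥ 2 such that I(tₙuₙ)/tₙ^q → ∞ for any sequences tₙ → ∞ in (0,∞) and uₙ → u in H with u ≠ 0; (J3) for every t ∈ (0,∞) with t ≠ 1 and every u ∈ N one has ((t² − 1)/2)·I'(u)(u) − I(tu) + I(u) < 0; (J4) J is coercive on N, i.e. J(uₙ) → ∞ for every sequence (uₙ) ⊂ N with ‖uₙ‖ → ∞. Then inf_N J > 0 and there exists a bounded sequence (uₙ) ⊂ N such that J(uₙ) → inf_N J and J'(uₙ) → 0 in the dual space H*. -/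
open Filter Topology

lemma hasFDerivAt_half_norm_sq {H : Type*} [NormedAddCommGroup H] [InnerProductSpace ℝ H] (x : H) :
    HasFDerivAt (fun u : H => (1 / 2 : ℝ) * ‖u‖ ^ 2) (innerSL ℝ x) x := by
  have h1 : HasFDerivAt (fun u : H => (inner ℝ u u : ℝ))
      ((fderivInnerCLM ℝ (x, x)).comp
        ((ContinuousLinearMap.id ℝ H).prod (ContinuousLinearMap.id ℝ H))) x :=
    (hasFDerivAt_id x).inner ℝ (hasFDerivAt_id x)
  have h2 := h1.const_mul (1 / 2 : ℝ)
  have e1 : (fun u : H => (1 / 2 : ℝ) * (inner ℝ u u : ℝ)) = fun u : H => (1 / 2 : ℝ) * ‖u‖ ^ 2 := by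
    funext u; rw [real_inner_self_eq_norm_sq]
  rw [e1] at h2
  refine h2.congr_fderiv ?_
  ext h
  simp [real_inner_comm]
  ring

lemma ekeland_aux {X : Type*} [MetricSpace X] [CompleteSpace X] {A : Set X} (hA : IsClosed A)
    {F : X → ℝ} (hF : ContinuousOn F A) {b : ℝ} (hb : ∀ x ∈ A, b ≤ F x)
    {ε δ : ℝ} (hε : 0 < ε) (hδ : 0 < δ) {x₀ : X} (hx₀ : x₀ ∈ A) (hx₀F : F x₀ ≤ b + ε * δ) :
    ∃ x ∈ A, F x ≤ F x₀ ∧ dist x₀ x ≤ δ ∧ ∀ y ∈ A, F x - ε * dist x y ≤ F y := by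
  classical
  set S : X → Set X := fun x => {y ∈ A | F y + ε * dist x y ≤ F x} with hSdef
  have hself : ∀ x ∈ A, x ∈ S x := by
    intro x hx; refine ⟨hx, ?_⟩; simp
  have hmem_le : ∀ x y, y ∈ S x → F y ≤ F x := by
    intro x y hy
    have := hy.2
    nlinarith [dist_nonneg (x := x) (y := y), hε.le]
  have hchain : ∀ x y, y ∈ S x → S y ⊆ S x := by
    intro x y hy z hz
    refine ⟨hz.1, ?_⟩
    have h1 := hy.2
    have h2 := hz.2
    have htri : dist x z ≤ dist x y + dist y z := dist_triangle x y z
    nlinarith [hε.le]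
  have hSne : ∀ x ∈ A, (F '' S x).Nonempty := fun x hx => ⟨F x, ⟨x, hself x hx, rfl⟩⟩
  have hSbdd : ∀ x, BddBelow (F '' S x) := by
    intro x
    exact ⟨b, by rintro _ ⟨y, hy, rfl⟩; exact hb y hy.1⟩
  have hex : ∀ (k : ℕ) (x : X), x ∈ A → ∃ y, y ∈ S x ∧ F y < sInf (F '' S x) + (1/2)^k := by
    intro k x hx
    obtain ⟨a, ⟨y, hy, rfl⟩, ha⟩ :=
      Real.lt_sInf_add_pos (hSne x hx) (by positivity : (0:ℝ) < (1/2)^k)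
    exact ⟨y, hy, ha⟩
  let next : ℕ → X → X := fun k x => if h : x ∈ A then Classical.choose (hex k x h) else x
  obtain ⟨u, hu0, hurec⟩ : ∃ u : ℕ → X, u 0 = x₀ ∧ ∀ k, u (k+1) = next k (u k) :=
    ⟨fun k => Nat.rec x₀ next k, rfl, fun k => rfl⟩
  have huA : ∀ k, u k ∈ A := by
    intro k
    induction k with
    | zero => rw [hu0]; exact hx₀
    | succ k ih =>
      rw [hurec]
      simp only [next]
      rw [dif_pos ih]
      exact (Classical.choose_spec (hex k (u k) ih)).1.1
  have huS : ∀ k, u (k+1) ∈ S (u k) ∧ F (u (k+1)) < sInf (F '' S (u k)) + (1/2)^k := by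
    intro k
    rw [hurec]
    simp only [next]
    rw [dif_pos (huA k)]
    exact Classical.choose_spec (hex k (u k) (huA k))
  have hmono : ∀ j k, j ≤ k → u k ∈ S (u j) := by
    intro j k hjk
    induction k with
    | zero => obtain rfl : j = 0 := Nat.le_zero.mp hjk; exact hself _ (huA 0)
    | succ k ih =>
      rcases Nat.lt_or_ge j (k+1) with h | h
      · exact hchain _ _ (ih (Nat.lt_succ_iff.mp h)) (huS k).1
      · obtain rfl : j = k + 1 := le_antisymm hjk h
        exact hself _ (huA _)
  have hFanti : Antitone fun k => F (u k) := by
    intro j k hjk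
    exact hmem_le _ _ (hmono j k hjk)
  have hFbdd : BddBelow (Set.range fun k => F (u k)) :=
    ⟨b, by rintro _ ⟨k, rfl⟩; exact hb _ (huA k)⟩
  set L : ℝ := ⨅ k, F (u k) with hL
  have hFtend : Tendsto (fun k => F (u k)) atTop (𝓝 L) := tendsto_atTop_ciInf hFanti hFbdd
  have hLle : ∀ k, L ≤ F (u k) := fun k => ciInf_le hFbdd k
  have hdist : ∀ j k, j ≤ k → ε * dist (u j) (u k) ≤ F (u j) - F (u k) := by
    intro j k hjk
    have := (hmono j k hjk).2
    linarith
  have hcauchy : CauchySeq u := by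
    apply cauchySeq_of_le_tendsto_0 (fun N => (F (u N) - L) / ε)
    · intro n m N hn hm
      rcases le_total n m with h | h
      · rw [le_div_iff₀ hε]
        have h1 := hdist n m h
        have h2 : F (u n) ≤ F (u N) := hFanti hn
        have h3 := hLle m
        nlinarith
      · rw [dist_comm, le_div_iff₀ hε]
        have h1 := hdist m n h
        have h2 : F (u m) ≤ F (u N) := hFanti hm
        have h3 := hLle n
        nlinarith
    · have : Tendsto (fun N => F (u N) - L) atTop (𝓝 (L - L)) := hFtend.sub tendsto_const_nhds
      simpa using this.div_const ε
  obtain ⟨x, hx⟩ := cauchySeq_tendsto_of_complete hcauchy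
  have hxA : x ∈ A := hA.mem_of_tendsto hx (Eventually.of_forall huA)
  have hFx : Tendsto (fun k => F (u k)) atTop (𝓝 (F x)) := by
    have h1 : Tendsto u atTop (𝓝[A] x) :=
      tendsto_nhdsWithin_of_tendsto_nhds_of_eventually_within u hx (Eventually.of_forall huA)
    exact (hF x hxA).tendsto.comp h1
  have hLx : L = F x := tendsto_nhds_unique hFtend hFx
  have hxS : ∀ j, F x + ε * dist (u j) x ≤ F (u j) := by
    intro j
    have hev : ∀ k, j ≤ k → F (u k) + ε * dist (u j) (u k) ≤ F (u j) := fun k hk => (hmono j k hk).2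
    have htend : Tendsto (fun k => F (u k) + ε * dist (u j) (u k)) atTop
        (𝓝 (F x + ε * dist (u j) x)) :=
      hFx.add ((tendsto_const_nhds.dist hx).const_mul ε)
    exact le_of_tendsto htend (eventually_atTop.mpr ⟨j, hev⟩)
  have hFxle : F x ≤ F x₀ := by
    have := hxS 0; rw [hu0] at this
    nlinarith [dist_nonneg (x := x₀) (y := x), hε.le]
  refine ⟨x, hxA, hFxle, ?_, ?_⟩
  · have h0 := hxS 0; rw [hu0] at h0
    have hbx : b ≤ F x := hb x hxA
    nlinarith
  · intro y hy
    by_contra hcon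
    push_neg at hcon
    have hyS : y ∈ S x := ⟨hy, by linarith⟩
    have hySj : ∀ j, y ∈ S (u j) := by
      intro j
      exact hchain (u j) x ⟨hxA, hxS j⟩ hyS
    have hFyge : ∀ j, F (u (j+1)) - (1/2)^j ≤ F y := by
      intro j
      have h1 : sInf (F '' S (u j)) ≤ F y := csInf_le (hSbdd _) ⟨y, hySj j, rfl⟩
      linarith [(huS j).2]
    have htend2 : Tendsto (fun j => F (u (j+1)) - (1/2:ℝ)^j) atTop (𝓝 (F x - 0)) := by
      refine Tendsto.sub ?_ ?_
      · exact hFx.comp (tendsto_add_atTop_nat 1)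
      · exact tendsto_pow_atTop_nhds_zero_of_lt_one (by norm_num) (by norm_num)
    have hge : F x - 0 ≤ F y := le_of_tendsto htend2 (Eventually.of_forall hFyge)
    have := hyS.2
    nlinarith [dist_nonneg (x := x) (y := y), hε]

lemma exists_subseq_tendsto_atTop_of_unbounded {f : ℕ → ℝ} (h : ¬ BddAbove (Set.range f)) :
    ∃ g : ℕ → ℕ, StrictMono g ∧ Tendsto (fun j => f (g j)) atTop atTop := by
  classical
  have h' : ∀ M : ℝ, ∃ n, M < f n := by
    intro M
    obtain ⟨_, ⟨n, rfl⟩, hn⟩ := not_bddAbove_iff.mp h M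
    exact ⟨n, hn⟩
  let step : ℕ → ℕ → ℕ := fun j m =>
    Classical.choose (h' (max (j : ℝ) ((Finset.range (m+1)).sup' ⟨m, by simp⟩ f)))
  obtain ⟨g, hg0, hgrec⟩ : ∃ g : ℕ → ℕ, g 0 = 0 ∧ ∀ j, g (j+1) = step (j+1) (g j) :=
    ⟨fun j => Nat.rec 0 (fun j m => step (j+1) m) j, rfl, fun j => rfl⟩
  have hspec : ∀ j, max ((j+1 : ℕ) : ℝ) ((Finset.range (g j + 1)).sup' ⟨g j, by simp⟩ f)
      < f (g (j+1)) := by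
    intro j
    rw [hgrec]
    exact_mod_cast Classical.choose_spec
      (h' (max ((j+1 : ℕ) : ℝ) ((Finset.range (g j + 1)).sup' ⟨g j, by simp⟩ f)))
  have hlt : ∀ j, g j < g (j+1) := by
    intro j
    by_contra hcon
    push_neg at hcon
    have h1 : f (g (j+1)) ≤ (Finset.range (g j + 1)).sup' ⟨g j, by simp⟩ f :=
      Finset.le_sup' f (by simp [Nat.lt_succ_iff.mpr hcon])
    have h2 := hspec j
    have := le_max_right ((j+1 : ℕ) : ℝ) ((Finset.range (g j + 1)).sup' ⟨g j, by simp⟩ f)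
    linarith
  refine ⟨g, strictMono_nat_of_lt_succ hlt, ?_⟩
  apply tendsto_atTop_mono' _ (eventually_atTop.mpr ⟨1, ?_⟩) tendsto_natCast_atTop_atTop
  intro j hj
  obtain ⟨i, rfl⟩ := Nat.exists_eq_add_of_le hj
  calc ((1 + i : ℕ) : ℝ) = ((i + 1 : ℕ) : ℝ) := by ring_nf
    _ ≤ max ((i+1 : ℕ) : ℝ) ((Finset.range (g i + 1)).sup' ⟨g i, by simp⟩ f) := le_max_left _ _
    _ ≤ f (g (i+1)) := (hspec i).le
    _ = f (g (1 + i)) := by rw [Nat.add_comm]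

set_option maxHeartbeats 2000000 in
/-- Abstract setting (Theorem `ThSetting`): under (J1)-(J4), the infimum of `J` on the
Nehari manifold is positive and there is a bounded minimizing Palais-Smale sequence. -/
theorem nehari_bounded_minimizing_sequence
    {H : Type*} [NormedAddCommGroup H] [InnerProductSpace ℝ H] [CompleteSpace H]
    (I : H → ℝ) (hI : ContDiff ℝ 1 I) (hI0 : I 0 = 0)
    (J : H → ℝ) (hJ : ∀ u, J u = (1 / 2 : ℝ) * ‖u‖ ^ 2 - I u)
    (𝒩 : Set H) (h𝒩 : 𝒩 = {u : H | u ≠ 0 ∧ fderiv ℝ J u u = 0})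
    -- (J1)
    (hJ1 : ∃ r > (0 : ℝ), 0 < sInf (J '' {u : H | ‖u‖ = r}))
    -- (J2)
    (hJ2 : ∃ q ≥ (2 : ℝ), ∀ (t : ℕ → ℝ) (w : ℕ → H) (u : H),
      (∀ n, 0 < t n) → Tendsto t atTop atTop → u ≠ 0 → Tendsto w atTop (𝓝 u) →
      Tendsto (fun n => I (t n • w n) / (t n) ^ q) atTop atTop)
    -- (J3)
    (hJ3 : ∀ t : ℝ, 0 < t → t ≠ 1 → ∀ u ∈ 𝒩,
      (t ^ 2 - 1) / 2 * fderiv ℝ I u u - I (t • u) + I u < 0)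
    -- (J4)
    (hJ4 : ∀ u : ℕ → H, (∀ n, u n ∈ 𝒩) →
      Tendsto (fun n => ‖u n‖) atTop atTop → Tendsto (fun n => J (u n)) atTop atTop) :
    0 < sInf (J '' 𝒩) ∧
      ∃ u : ℕ → H, (∀ n, u n ∈ 𝒩) ∧ (∃ C : ℝ, ∀ n, ‖u n‖ ≤ C) ∧
        Tendsto (fun n => J (u n)) atTop (𝓝 (sInf (J '' 𝒩))) ∧
        Tendsto (fun n => ‖fderiv ℝ J (u n)‖) atTop (𝓝 0) := by
  classical
  obtain ⟨r, hr, hc⟩ := hJ1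
  obtain ⟨q, hq, hq2⟩ := hJ2
  have hJfun : J = fun u => (1 / 2 : ℝ) * ‖u‖ ^ 2 - I u := funext hJ
  subst hJfun
  subst h𝒩
  set J : H → ℝ := fun u => (1 / 2 : ℝ) * ‖u‖ ^ 2 - I u with hJdef
  set 𝒩 : Set H := {u : H | u ≠ 0 ∧ fderiv ℝ J u u = 0} with hNdef
  -- basic differentiability facts
  have hIdiff : Differentiable ℝ I := hI.differentiable one_ne_zero
  set D : H → H →L[ℝ] ℝ := fun u => innerSL ℝ u - fderiv ℝ I u with hDdef
  have hD : ∀ u, HasFDerivAt J (D u) u := by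
    intro u
    rw [hJdef, hDdef]
    exact (hasFDerivAt_half_norm_sq u).sub (hIdiff u).hasFDerivAt
  have hfJ : ∀ u, fderiv ℝ J u = D u := fun u => (hD u).fderiv
  have hJcont : Continuous J := by
    rw [hJdef]
    exact (continuous_const.mul (continuous_norm.pow 2)).sub hI.continuous
  have hDcont : Continuous D := by
    rw [hDdef]
    exact ((innerSL ℝ).continuous).sub (hI.continuous_fderiv one_ne_zero)
  have hDDcont : Continuous fun u => D u u := hDcont.clm_apply continuous_id
  have hmemN : ∀ u : H, u ∈ 𝒩 ↔ (u ≠ 0 ∧ D u u = 0) := by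
    intro u
    rw [hNdef]
    simp only [Set.mem_setOf_eq, hfJ]
  have hJ0 : J 0 = 0 := by rw [hJdef]; simp [hI0]
  have hns : ∀ (t : ℝ) (x : H), ‖t • x‖^2 = t^2 * ‖x‖^2 := by
    intro t x; rw [norm_smul, mul_pow, Real.norm_eq_abs, sq_abs]
  -- facts about c
  set c := sInf (J '' {u : H | ‖u‖ = r}) with hcdef
  have himg_ne : (J '' {u : H | ‖u‖ = r}).Nonempty := by
    by_contra h
    rw [Set.not_nonempty_iff_eq_empty] at h
    rw [hcdef, h, Real.sInf_empty] at hc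
    exact lt_irrefl 0 hc
  have himg_bdd : BddBelow (J '' {u : H | ‖u‖ = r}) := by
    by_contra h
    rw [hcdef, Real.sInf_of_not_bddBelow h] at hc
    exact lt_irrefl 0 hc
  have hcle : ∀ v : H, ‖v‖ = r → c ≤ J v := fun v hv => csInf_le himg_bdd ⟨v, hv, rfl⟩
  obtain ⟨v₀, hv₀⟩ : ∃ v : H, ‖v‖ = r := by
    obtain ⟨_, ⟨v, hv, rfl⟩⟩ := himg_ne; exact ⟨v, hv⟩
  -- key consequence of (J3)
  have key3 : ∀ u ∈ 𝒩, ∀ t : ℝ, 0 < t → t ≠ 1 → J (t • u) < J u := by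
    intro u hu t ht ht1
    have hu' := (hmemN u).mp hu
    have hid : fderiv ℝ I u u = ‖u‖^2 := by
      have h0 := hu'.2
      rw [hDdef] at h0
      simp only [ContinuousLinearMap.sub_apply, innerSL_apply_apply, sub_eq_zero] at h0
      rw [← h0, real_inner_self_eq_norm_sq]
    have h3 := hJ3 t ht ht1 u hu
    rw [hid] at h3
    have e1 : J (t • u) = (1/2 : ℝ) * (t^2 * ‖u‖^2) - I (t • u) := by
      rw [hJdef]; simp only; rw [hns]
    have e2 : J u = (1/2 : ℝ) * ‖u‖^2 - I u := by rw [hJdef]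
    rw [e1, e2]
    nlinarith [h3]
  -- existence of a large S with J (S • w) < 0
  have hbig : ∀ w : H, w ≠ 0 → ∃ S : ℝ, 1 ≤ S ∧ 2*r/‖w‖ ≤ S ∧ J (S • w) < 0 := by
    intro w hw
    have hw' : 0 < ‖w‖ := norm_pos_iff.mpr hw
    have htt : Tendsto (fun k : ℕ => ((k:ℝ)+1)) atTop atTop :=
      tendsto_atTop_add_const_right _ _ tendsto_natCast_atTop_atTop
    have H2 := hq2 (fun k => ((k:ℝ)+1)) (fun _ => w) w (fun k => by positivity) htt hw
      tendsto_const_nhds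
    have hev1 : ∀ᶠ k : ℕ in atTop,
        (‖w‖^2/2 + 1) < I (((k:ℝ)+1) • w) / ((k:ℝ)+1)^q := H2.eventually_gt_atTop _
    have hev2 : ∀ᶠ k : ℕ in atTop, max 1 (2*r/‖w‖) ≤ ((k:ℝ)+1) := htt.eventually_ge_atTop _
    obtain ⟨k, h1, h2⟩ := (hev1.and hev2).exists
    set S := ((k:ℝ)+1) with hSdef
    have hS1 : 1 ≤ S := le_trans (le_max_left _ _) h2
    have hSpos : (0:ℝ) < S := by linarith
    have hSq : (0:ℝ) < S^q := Real.rpow_pos_of_pos hSpos q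
    have hS2q : S^2 ≤ S^q := by
      calc S^2 = S^((2:ℕ):ℝ) := (Real.rpow_natCast S 2).symm
      _ ≤ S^q := Real.rpow_le_rpow_of_exponent_le hS1 (by exact_mod_cast hq)
    refine ⟨S, hS1, le_trans (le_max_right _ _) h2, ?_⟩
    have hIb : (‖w‖^2/2 + 1) * S^q < I (S • w) := (lt_div_iff₀ hSq).mp h1
    have e1 : J (S • w) = (1/2 : ℝ) * (S^2 * ‖w‖^2) - I (S • w) := by
      rw [hJdef]; simp only; rw [hns]
    rw [e1]
    have hmul : S^2 * (‖w‖^2/2) ≤ S^q * (‖w‖^2/2) :=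
      mul_le_mul_of_nonneg_right hS2q (by positivity)
    nlinarith
  -- existence of Nehari points on each ray
  have hexN : ∀ w : H, w ≠ 0 → ∃ s : ℝ, 0 < s ∧ s • w ∈ 𝒩 := by
    intro w hw
    have hw' : 0 < ‖w‖ := norm_pos_iff.mpr hw
    obtain ⟨S, hS1, hS2, hSneg⟩ := hbig w hw
    have hScont : Continuous fun s : ℝ => J (s • w) :=
      hJcont.comp (continuous_id.smul continuous_const)
    obtain ⟨s₀, hs₀mem, hs₀max⟩ := isCompact_Icc.exists_isMaxOn
      (⟨0, Set.mem_Icc.mpr ⟨le_rfl, by linarith⟩⟩ : (Set.Icc (0:ℝ) S).Nonempty)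
      hScont.continuousOn
    have hrwpos : 0 < r/‖w‖ := by positivity
    have hrw : r/‖w‖ ∈ Set.Icc (0:ℝ) S := by
      constructor
      · positivity
      · have h2e : 2*r/‖w‖ = 2*(r/‖w‖) := by ring
        linarith [hS2, hrwpos, h2e]
    have hnormr : ‖(r/‖w‖) • w‖ = r := by
      rw [norm_smul, Real.norm_eq_abs, abs_of_pos hrwpos]
      field_simp
    have hval : c ≤ J (s₀ • w) := le_trans (hcle _ hnormr) (hs₀max hrw)
    have hJ0w : J ((0:ℝ) • w) = 0 := by rw [zero_smul]; exact hJ0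
    have hs₀0 : s₀ ≠ 0 := by
      rintro rfl
      rw [hJ0w] at hval
      linarith
    have hs₀S : s₀ ≠ S := by
      rintro rfl
      linarith
    have hs₀pos : 0 < s₀ := lt_of_le_of_ne hs₀mem.1 (Ne.symm hs₀0)
    have hs₀lt : s₀ < S := lt_of_le_of_ne hs₀mem.2 hs₀S
    have hloc : IsLocalMax (fun s : ℝ => J (s • w)) s₀ :=
      hs₀max.isLocalMax (Icc_mem_nhds hs₀pos hs₀lt)
    have hder : HasDerivAt (fun s : ℝ => J (s • w)) (D (s₀ • w) w) s₀ := by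
      have h1 : HasDerivAt (fun s : ℝ => s • w) w s₀ := by
        simpa using (hasDerivAt_id s₀).smul_const w
      have := (hD (s₀ • w)).comp_hasDerivAt s₀ h1
      exact this
    have hzero : D (s₀ • w) w = 0 := hloc.hasDerivAt_eq_zero hder
    refine ⟨s₀, hs₀pos, (hmemN _).mpr ⟨smul_ne_zero hs₀0 hw, ?_⟩⟩
    rw [map_smul, hzero]
    simp
  -- uniqueness of the Nehari point on each ray
  have huniq : ∀ w : H, ∀ s₁ s₂ : ℝ, 0 < s₁ → s₁ • w ∈ 𝒩 → 0 < s₂ → s₂ • w ∈ 𝒩 → s₁ = s₂ := by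
    intro w s₁ s₂ h1 hN1 h2 hN2
    by_contra hne
    have e1 : (s₂/s₁) • (s₁ • w) = s₂ • w := by
      rw [smul_smul]; congr 1; field_simp
    have e2 : (s₁/s₂) • (s₂ • w) = s₁ • w := by
      rw [smul_smul]; congr 1; field_simp
    have k1 := key3 _ hN1 (s₂/s₁) (by positivity)
      (by intro h; rw [div_eq_one_iff_eq h1.ne'] at h; exact hne h.symm)
    have k2 := key3 _ hN2 (s₁/s₂) (by positivity)
      (by intro h; rw [div_eq_one_iff_eq h2.ne'] at h; exact hne h)
    rw [e1] at k1
    rw [e2] at k2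
    linarith
  -- the projection onto the Nehari manifold along rays
  have hTex : ∀ w : H, ∃ s : ℝ, w ≠ 0 → (0 < s ∧ s • w ∈ 𝒩) := by
    intro w
    by_cases h : w = 0
    · exact ⟨1, fun h' => absurd h h'⟩
    · obtain ⟨s, hs⟩ := hexN w h
      exact ⟨s, fun _ => hs⟩
  choose T hT using hTex
  have hTpos : ∀ w : H, w ≠ 0 → 0 < T w := fun w hw => (hT w hw).1
  have hTN : ∀ w : H, w ≠ 0 → T w • w ∈ 𝒩 := fun w hw => (hT w hw).2
  have hTuniq : ∀ w : H, w ≠ 0 → ∀ s, 0 < s → s • w ∈ 𝒩 → s = T w :=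
    fun w hw s hs hN => huniq w s (T w) hs hN (hTpos w hw) (hTN w hw)
  -- J ≥ c on the Nehari manifold
  have hJgec : ∀ u ∈ 𝒩, c ≤ J u := by
    intro u hu
    have hu0 : u ≠ 0 := ((hmemN u).mp hu).1
    have hu' : 0 < ‖u‖ := norm_pos_iff.mpr hu0
    have hnr : ‖(r/‖u‖) • u‖ = r := by
      rw [norm_smul, Real.norm_eq_abs, abs_of_pos (by positivity)]
      field_simp
    by_cases h : r/‖u‖ = 1
    · apply hcle
      have : r = ‖u‖ := by
        field_simp at h
        linarith
      rw [this]
    · exact le_of_lt (lt_of_le_of_lt (hcle _ hnr) (key3 u hu _ (by positivity) h))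
  -- the Nehari manifold is bounded away from 0
  have hrho : ∃ ρ : ℝ, 0 < ρ ∧ ∀ u ∈ 𝒩, ρ ≤ ‖u‖ := by
    by_contra hcon
    push_neg at hcon
    have hseq : ∀ k : ℕ, ∃ u : H, u ∈ 𝒩 ∧ ‖u‖ < 1/((k:ℝ)+1) := by
      intro k
      obtain ⟨u, hu1, hu2⟩ := hcon (1/((k:ℝ)+1)) (by positivity)
      exact ⟨u, hu1, hu2⟩
    choose v hv1 hv2 using hseq
    have hv0 : Tendsto v atTop (𝓝 0) := by
      rw [tendsto_iff_norm_sub_tendsto_zero]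
      apply squeeze_zero (fun k => norm_nonneg _) (fun k => ?_)
        tendsto_one_div_add_atTop_nhds_zero_nat
      simpa using (hv2 k).le
    have hJv : Tendsto (fun k => J (v k)) atTop (𝓝 (J 0)) := (hJcont.tendsto 0).comp hv0
    have hge : c ≤ J 0 := ge_of_tendsto' hJv (fun k => hJgec _ (hv1 k))
    rw [hJ0] at hge
    linarith
  obtain ⟨ρ, hρpos, hρle⟩ := hrho
  -- the infimum m over the Nehari manifold
  have hv₀ne : v₀ ≠ 0 := by
    intro h
    rw [h, norm_zero] at hv₀
    linarith
  have hNne : 𝒩.Nonempty := ⟨T v₀ • v₀, hTN v₀ hv₀ne⟩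
  have hJNne : (J '' 𝒩).Nonempty := hNne.image J
  have hJNbdd : BddBelow (J '' 𝒩) := ⟨c, by rintro _ ⟨u, hu, rfl⟩; exact hJgec u hu⟩
  set m := sInf (J '' 𝒩) with hmdef
  have hcm : c ≤ m := le_csInf hJNne (by rintro _ ⟨u, hu, rfl⟩; exact hJgec u hu)
  have hmpos : 0 < m := lt_of_lt_of_le hc hcm
  have hmle : ∀ u ∈ 𝒩, m ≤ J u := fun u hu => csInf_le hJNbdd ⟨u, hu, rfl⟩
  -- continuity of T
  have hTcont : ∀ (w₀ : H), w₀ ≠ 0 → ∀ (v : ℕ → H), (∀ k, v k ≠ 0) → Tendsto v atTop (𝓝 w₀) →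
      Tendsto (fun k => T (v k)) atTop (𝓝 (T w₀)) := by
    intro w₀ hw₀ v hv hvt
    have hbddτ : BddAbove (Set.range fun k => T (v k)) := by
      by_contra hcon
      obtain ⟨g, hgmono, hgt⟩ := exists_subseq_tendsto_atTop_of_unbounded hcon
      have hvg : Tendsto (fun j => v (g j)) atTop (𝓝 w₀) := hvt.comp hgmono.tendsto_atTop
      have H2 := hq2 (fun j => T (v (g j))) (fun j => v (g j)) w₀
        (fun j => hTpos _ (hv _)) hgt hw₀ hvg
      have hev1 : ∀ᶠ j in atTop, ((‖w₀‖+1)^2/2 + 1) <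
          I (T (v (g j)) • v (g j)) / (T (v (g j)))^q := H2.eventually_gt_atTop _
      have hev2 : ∀ᶠ j in atTop, (1:ℝ) ≤ T (v (g j)) := hgt.eventually_ge_atTop 1
      have hev3 : ∀ᶠ j in atTop, ‖v (g j)‖ ≤ ‖w₀‖ + 1 := by
        have h1 : Tendsto (fun j => ‖v (g j)‖) atTop (𝓝 ‖w₀‖) := hvg.norm
        exact (h1.eventually_lt_const (by linarith)).mono fun j hj => hj.le
      obtain ⟨j, ⟨h1, h2⟩, h3⟩ := ((hev1.and hev2).and hev3).exists
      set τ := T (v (g j)) with hτdef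
      set x := v (g j) with hxdef
      have hcJ : c ≤ J (τ • x) := hJgec _ (hTN x (hv _))
      have hτpos : (0:ℝ) < τ := by linarith
      have hτq : (0:ℝ) < τ^q := Real.rpow_pos_of_pos hτpos q
      have hτ2q : τ^2 ≤ τ^q := by
        calc τ^2 = τ^((2:ℕ):ℝ) := (Real.rpow_natCast τ 2).symm
        _ ≤ τ^q := Real.rpow_le_rpow_of_exponent_le h2 (by exact_mod_cast hq)
      have hIineq : ((‖w₀‖+1)^2/2 + 1) * τ^q < I (τ • x) := (lt_div_iff₀ hτq).mp h1
      have hx2 : ‖x‖^2 ≤ (‖w₀‖+1)^2 := by nlinarith [norm_nonneg x, norm_nonneg w₀]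
      have hJneg : J (τ • x) < 0 := by
        have e1 : J (τ • x) = (1/2 : ℝ) * (τ^2 * ‖x‖^2) - I (τ • x) := by
          rw [hJdef]; simp only; rw [hns]
        rw [e1]
        have hh1 : τ^2 * ‖x‖^2 ≤ τ^q * (‖w₀‖+1)^2 := by nlinarith [norm_nonneg x]
        nlinarith
      linarith
    obtain ⟨M, hM⟩ := hbddτ
    apply tendsto_of_subseq_tendsto
    intro ns hns
    have hmemIcc : ∀ j, T (v (ns j)) ∈ Set.Icc (0:ℝ) M :=
      fun j => ⟨(hTpos _ (hv _)).le, hM ⟨ns j, rfl⟩⟩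
    obtain ⟨a, haIcc, φ, hφ, hφt⟩ := isCompact_Icc.tendsto_subseq hmemIcc
    refine ⟨φ, ?_⟩
    have hσ : Tendsto (fun n => ns (φ n)) atTop atTop := hns.comp hφ.tendsto_atTop
    have hvσ : Tendsto (fun n => v (ns (φ n))) atTop (𝓝 w₀) := hvt.comp hσ
    have hφt' : Tendsto (fun n => T (v (ns (φ n)))) atTop (𝓝 a) := hφt
    have huσ : Tendsto (fun n => T (v (ns (φ n))) • v (ns (φ n))) atTop (𝓝 (a • w₀)) :=
      hφt'.smul hvσ
    have hJa : c ≤ J (a • w₀) :=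
      ge_of_tendsto' ((hJcont.tendsto _).comp huσ) (fun n => hJgec _ (hTN _ (hv _)))
    have ha0 : a ≠ 0 := by
      rintro rfl
      rw [zero_smul, hJ0] at hJa
      linarith
    have hapos : 0 < a := lt_of_le_of_ne haIcc.1 (Ne.symm ha0)
    have hDa : D (a • w₀) (a • w₀) = 0 := by
      have h1 : Tendsto (fun n => D (T (v (ns (φ n))) • v (ns (φ n)))
          (T (v (ns (φ n))) • v (ns (φ n)))) atTop (𝓝 (D (a • w₀) (a • w₀))) :=
        (hDDcont.tendsto _).comp huσ
      have h2 : (fun n => D (T (v (ns (φ n))) • v (ns (φ n)))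
          (T (v (ns (φ n))) • v (ns (φ n)))) = fun _ => (0:ℝ) :=
        funext fun n => ((hmemN _).mp (hTN _ (hv _))).2
      rw [h2] at h1
      exact (tendsto_nhds_unique h1 tendsto_const_nhds)
    have haN : a • w₀ ∈ 𝒩 := (hmemN _).mpr ⟨smul_ne_zero ha0 hw₀, hDa⟩
    have haT : a = T w₀ := hTuniq w₀ hw₀ a hapos haN
    rw [← haT]
    exact hφt'
  -- the reduced functional on rays
  set Ψ : H → ℝ := fun w => J (T w • w) with hΨdef
  have hΨcont : ∀ w₀ : H, w₀ ≠ 0 → ContinuousAt Ψ w₀ := by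
    intro w₀ hw₀
    have : Tendsto Ψ (𝓝 w₀) (𝓝 (Ψ w₀)) := by
      apply tendsto_iff_seq_tendsto.mpr
      intro x hx
      set x' : ℕ → H := fun k => if x k = 0 then w₀ else x k with hx'def
      have hx'ne : ∀ k, x' k ≠ 0 := by
        intro k
        by_cases h : x k = 0 <;> simp [hx'def, h, hw₀]
      have hev : ∀ᶠ k in atTop, x k = x' k := by
        have hnorm : Tendsto (fun k => ‖x k‖) atTop (𝓝 ‖w₀‖) := hx.norm
        have hpos : ∀ᶠ k in atTop, 0 < ‖x k‖ :=
          hnorm.eventually_const_lt (norm_pos_iff.mpr hw₀)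
        refine hpos.mono fun k hk => ?_
        have : x k ≠ 0 := norm_pos_iff.mp hk
        simp [hx'def, this]
      have hx' : Tendsto x' atTop (𝓝 w₀) := hx.congr' hev
      have hT' : Tendsto (fun k => T (x' k)) atTop (𝓝 (T w₀)) := hTcont w₀ hw₀ x' hx'ne hx'
      have h1 : Tendsto (fun k => T (x' k) • x' k) atTop (𝓝 (T w₀ • w₀)) := hT'.smul hx'
      have h2 : Tendsto (fun k => Ψ (x' k)) atTop (𝓝 (Ψ w₀)) := (hJcont.tendsto _).comp h1
      exact h2.congr' (hev.mono fun k hk => by simp only [Function.comp_apply]; rw [hk])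
    exact this
  have hΨgem : ∀ w : H, w ≠ 0 → m ≤ Ψ w := fun w hw => hmle _ (hTN w hw)
  have hmaxT : ∀ w : H, w ≠ 0 → ∀ s : ℝ, 0 < s → J (s • w) ≤ J (T w • w) := by
    intro w hw s hs
    by_cases h : s = T w
    · rw [h]
    · have e : (s/T w) • (T w • w) = s • w := by
        rw [smul_smul]; congr 1; field_simp [(hTpos w hw).ne']
      have hk3 := key3 _ (hTN w hw) (s/T w) (div_pos hs (hTpos w hw))
        (by intro hh; rw [div_eq_one_iff_eq (hTpos w hw).ne'] at hh; exact h hh)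
      rw [e] at hk3
      exact hk3.le
  have hTofN : ∀ u ∈ 𝒩, T (‖u‖⁻¹ • u) = ‖u‖ ∧ Ψ (‖u‖⁻¹ • u) = J u := by
    intro u hu
    have hu0 : u ≠ 0 := ((hmemN u).mp hu).1
    have hnu : 0 < ‖u‖ := norm_pos_iff.mpr hu0
    have hwne : (‖u‖⁻¹ • u) ≠ 0 := smul_ne_zero (inv_ne_zero hnu.ne') hu0
    have he : ‖u‖ • (‖u‖⁻¹ • u) = u := by
      rw [smul_smul, mul_inv_cancel₀ hnu.ne', one_smul]
    have h1 : T (‖u‖⁻¹ • u) = ‖u‖ :=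
      (hTuniq _ hwne ‖u‖ hnu (by rw [he]; exact hu)).symm
    refine ⟨h1, ?_⟩
    rw [hΨdef]
    simp only
    rw [h1, he]
  -- the annulus
  set A : Set H := {w : H | 1/2 ≤ ‖w‖ ∧ ‖w‖ ≤ 2} with hAdef
  have hAclosed : IsClosed A := by
    have : A = (fun w : H => ‖w‖) ⁻¹' (Set.Icc (1/2) 2) := by
      ext w; simp [hAdef, Set.mem_Icc]
    rw [this]
    exact isClosed_Icc.preimage continuous_norm
  have hAne0 : ∀ w ∈ A, w ≠ 0 := by
    intro w hw h
    have h1 : 1/2 ≤ ‖w‖ := hw.1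
    rw [h, norm_zero] at h1
    linarith
  -- the key construction
  have hkey : ∀ ε : ℝ, 0 < ε → ∃ u, u ∈ 𝒩 ∧ J u ≤ m + ε ∧ ‖D u‖ ≤ (5/(4*ρ)) * ε := by
    intro ε hε
    obtain ⟨a0, ⟨u₀, hu₀N, rfl⟩, ha⟩ :=
      Real.lt_sInf_add_pos hJNne (by positivity : (0:ℝ) < ε * (1/4))
    rw [← hmdef] at ha
    have hu₀0 : u₀ ≠ 0 := ((hmemN u₀).mp hu₀N).1
    set w₀ : H := ‖u₀‖⁻¹ • u₀ with hw₀def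
    have hw₀n : ‖w₀‖ = 1 := by
      rw [hw₀def, norm_smul, norm_inv, norm_norm,
        inv_mul_cancel₀ (norm_ne_zero_iff.mpr hu₀0)]
    obtain ⟨hTu₀, hΨu₀⟩ := hTofN u₀ hu₀N
    rw [← hw₀def] at hTu₀ hΨu₀
    have hw₀A : w₀ ∈ A := ⟨by rw [hw₀n]; norm_num, by rw [hw₀n]; norm_num⟩
    have hΨconton : ContinuousOn Ψ A := fun w hw => (hΨcont w (hAne0 w hw)).continuousWithinAt
    obtain ⟨w₁, hw₁A, hw₁le, hw₁dist, hEk⟩ := ekeland_aux hAclosed hΨconton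
      (fun w hw => hΨgem w (hAne0 w hw)) hε (by norm_num : (0:ℝ) < 1/4) hw₀A
      (by rw [hΨu₀]; linarith)
    have hw₁0 : w₁ ≠ 0 := hAne0 _ hw₁A
    have hdw : |‖w₁‖ - ‖w₀‖| ≤ dist w₀ w₁ := by
      rw [dist_comm, dist_eq_norm]
      exact abs_norm_sub_norm_le _ _
    have hdw' := abs_le.mp hdw
    have hw₁lb : 3/4 ≤ ‖w₁‖ := by rw [hw₀n] at hdw'; linarith [hdw'.1, hw₁dist]
    have hw₁ub : ‖w₁‖ ≤ 5/4 := by rw [hw₀n] at hdw'; linarith [hdw'.2, hw₁dist]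
    set τ : ℝ := T w₁ with hτdef
    have hτgt : 0 < τ := hTpos w₁ hw₁0
    set u : H := τ • w₁ with hudef
    have huN : u ∈ 𝒩 := hTN w₁ hw₁0
    have hΨw₁ : Ψ w₁ = J u := by rw [hΨdef]
    have hJu : J u ≤ m + ε := by
      have h1 : Ψ w₁ ≤ Ψ w₀ := hw₁le
      rw [hΨw₁, hΨu₀] at h1
      exact h1.trans (ha.le.trans (add_le_add_right (by linarith only [hε] : ε * (1/4) ≤ ε) m))
    have hτlb : 4*ρ/5 ≤ τ := by
      have h1 : ρ ≤ ‖u‖ := hρle u huN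
      have h2 : ‖u‖ = τ * ‖w₁‖ := by
        rw [hudef, norm_smul, Real.norm_eq_abs, abs_of_pos hτgt]
      nlinarith
    have hclaim : ∀ z : H, -(ε/τ) * ‖z‖ ≤ D u z := by
      intro z
      by_cases hz : z = 0
      · simp [hz]
      have hz' : 0 < ‖z‖ := norm_pos_iff.mpr hz
      set s : ℕ → ℝ := fun k => (1/(4*(‖z‖+1))) * (1/((k:ℝ)+1)) with hsdef
      have hspos : ∀ k, 0 < s k := by intro k; rw [hsdef]; positivity
      have hsle : ∀ k, s k ≤ 1/(4*(‖z‖+1)) := by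
        intro k
        rw [hsdef]
        have h1 : 1/((k:ℝ)+1) ≤ 1 := by
          rw [div_le_one (by positivity)]
          linarith [Nat.cast_nonneg (α := ℝ) k]
        have h2 : (0:ℝ) ≤ 1/(4*(‖z‖+1)) := by positivity
        nlinarith
      have hsz : ∀ k, s k * ‖z‖ ≤ 1/4 := by
        intro k
        have h1 : s k * ‖z‖ ≤ (1/(4*(‖z‖+1))) * ‖z‖ :=
          mul_le_mul_of_nonneg_right (hsle k) (norm_nonneg z)
        have h2 : (1/(4*(‖z‖+1))) * ‖z‖ ≤ 1/4 := by
          rw [div_mul_eq_mul_div, div_le_div_iff₀ (by positivity) (by norm_num)]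
          nlinarith
        linarith
      have hstend : Tendsto s atTop (𝓝 0) := by
        have := tendsto_one_div_add_atTop_nhds_zero_nat.const_mul (1/(4*(‖z‖+1)))
        simpa [hsdef] using this
      set y : ℕ → H := fun k => w₁ + s k • z with hydef
      have hyA : ∀ k, y k ∈ A := by
        intro k
        have hnsz : ‖s k • z‖ = s k * ‖z‖ := by
          rw [norm_smul, Real.norm_eq_abs, abs_of_pos (hspos k)]
        have ht1 : ‖w₁‖ ≤ ‖w₁ + s k • z‖ + ‖s k • z‖ := by
          have := norm_add_le (w₁ + s k • z) (-(s k • z))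
          simpa using this
        have ht2 : ‖w₁ + s k • z‖ ≤ ‖w₁‖ + ‖s k • z‖ := norm_add_le _ _
        constructor
        · show 1/2 ≤ ‖w₁ + s k • z‖
          rw [hnsz] at ht1
          linarith [hsz k]
        · show ‖w₁ + s k • z‖ ≤ 2
          rw [hnsz] at ht2
          linarith [hsz k]
      have hyne : ∀ k, y k ≠ 0 := fun k => hAne0 _ (hyA k)
      have hyt : Tendsto y atTop (𝓝 w₁) := by
        have h1 : Tendsto (fun k => s k • z) atTop (𝓝 ((0:ℝ) • z)) := hstend.smul_const z
        rw [zero_smul] at h1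
        have h2 : Tendsto (fun k => w₁ + s k • z) atTop (𝓝 (w₁ + 0)) :=
          tendsto_const_nhds.add h1
        rw [add_zero] at h2
        exact h2
      set τ' : ℕ → ℝ := fun k => T (y k) with hτ'def
      have hτ'pos : ∀ k, 0 < τ' k := fun k => hTpos _ (hyne k)
      have hτ't : Tendsto τ' atTop (𝓝 τ) := hTcont w₁ hw₁0 y hyne hyt
      have hstep : ∀ k, ∃ ξ : H,
          ‖ξ - τ' k • w₁‖ ≤ s k * τ' k * ‖z‖ ∧ -(ε/τ' k) * ‖z‖ ≤ D ξ z := by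
        intro k
        set b : H := (s k * τ' k) • z with hbdef
        set a : H := τ' k • w₁ with hadef
        have hEk' : Ψ w₁ - ε * dist w₁ (y k) ≤ Ψ (y k) := hEk (y k) (hyA k)
        have hdist : dist w₁ (y k) = s k * ‖z‖ := by
          rw [hydef, dist_eq_norm]
          simp only [sub_add_cancel_left]
          rw [norm_neg, norm_smul, Real.norm_eq_abs, abs_of_pos (hspos k)]
        have hΨy : Ψ (y k) = J (a + b) := by
          rw [hΨdef]
          simp only
          congr 1
          rw [hydef]
          simp only
          rw [smul_add, smul_smul, mul_comm]
        have hΨw : J a ≤ Ψ w₁ := by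
          rw [hΨdef]
          exact hmaxT w₁ hw₁0 (τ' k) (hτ'pos k)
        have hineq : J a - ε * (s k * ‖z‖) ≤ J (a + b) := by
          rw [hdist] at hEk'
          rw [hΨy] at hEk'
          linarith
        have hg : ∀ σ : ℝ, HasDerivAt (fun σ : ℝ => J (a + σ • b)) (D (a + σ • b) b) σ := by
          intro σ
          have h1 : HasDerivAt (fun σ : ℝ => a + σ • b) b σ := by
            simpa using ((hasDerivAt_id σ).smul_const b).const_add a
          have := (hD (a + σ • b)).comp_hasDerivAt σ h1
          exact this
        obtain ⟨θ, hθmem, hθeq⟩ := exists_hasDerivAt_eq_slope (fun σ : ℝ => J (a + σ • b))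
          (fun σ => D (a + σ • b) b) (by norm_num : (0:ℝ) < 1)
          (fun σ _ => ((hg σ).continuousAt).continuousWithinAt) (fun σ _ => hg σ)
        have h2 : D (a + θ • b) b = J (a + b) - J a := by simpa using hθeq
        have h3 : D (a + θ • b) b = (s k * τ' k) * D (a + θ • b) z := by
          rw [hbdef, map_smul, smul_eq_mul]
        refine ⟨a + θ • b, ?_, ?_⟩
        · rw [hadef, add_sub_cancel_left, norm_smul, Real.norm_eq_abs,
            abs_of_pos hθmem.1, hbdef, norm_smul, Real.norm_eq_abs,
            abs_of_pos (mul_pos (hspos k) (hτ'pos k))]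
          have hX : (0:ℝ) ≤ s k * τ' k * ‖z‖ :=
            mul_nonneg (mul_nonneg (hspos k).le (hτ'pos k).le) (norm_nonneg z)
          nlinarith [hθmem.1, hθmem.2]
        · have h4 : s k * (τ' k * D (a + θ • b) z) = J (a + b) - J a := by
            calc s k * (τ' k * D (a + θ • b) z) = (s k * τ' k) * D (a + θ • b) z := by ring
            _ = J (a + b) - J a := by rw [← h3, h2]
          have h7 : s k * (-(ε * ‖z‖)) ≤ s k * (τ' k * D (a + θ • b) z) := by
            rw [h4]
            have he : s k * (-(ε * ‖z‖)) = -(ε * (s k * ‖z‖)) := by ring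
            rw [he]
            linarith
          have h6 := le_of_mul_le_mul_left h7 (hspos k)
          have he2 : -(ε / τ' k) * ‖z‖ = (-(ε * ‖z‖)) / τ' k := by ring
          rw [he2, div_le_iff₀ (hτ'pos k)]
          exact h6.trans_eq (mul_comm _ _)
      choose ξ hξ1 hξ2 using hstep
      have hξt : Tendsto ξ atTop (𝓝 u) := by
        rw [tendsto_iff_norm_sub_tendsto_zero]
        apply squeeze_zero (fun k => norm_nonneg _)
          (g := fun k => s k * τ' k * ‖z‖ + |τ' k - τ| * ‖w₁‖) ?_ ?_
        · intro k
          calc ‖ξ k - u‖ = ‖(ξ k - τ' k • w₁) + (τ' k • w₁ - u)‖ := by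
                rw [sub_add_sub_cancel]
          _ ≤ ‖ξ k - τ' k • w₁‖ + ‖τ' k • w₁ - u‖ := norm_add_le _ _
          _ ≤ s k * τ' k * ‖z‖ + |τ' k - τ| * ‖w₁‖ := by
              have he : τ' k • w₁ - u = (τ' k - τ) • w₁ := by
                rw [hudef, sub_smul]
              have : ‖τ' k • w₁ - u‖ = |τ' k - τ| * ‖w₁‖ := by
                rw [he, norm_smul, Real.norm_eq_abs]
              rw [this]
              exact add_le_add_left (hξ1 k) _
        · have t1 : Tendsto (fun k => s k * τ' k * ‖z‖) atTop (𝓝 (0 * τ * ‖z‖)) :=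
            (hstend.mul hτ't).mul_const ‖z‖
          have t2 : Tendsto (fun k => |τ' k - τ| * ‖w₁‖) atTop (𝓝 (|τ - τ| * ‖w₁‖)) :=
            ((hτ't.sub tendsto_const_nhds).abs).mul_const ‖w₁‖
          have := t1.add t2
          simpa using this
      have hDz : Continuous fun v : H => D v z := hDcont.clm_apply continuous_const
      have hDξ : Tendsto (fun k => D (ξ k) z) atTop (𝓝 (D u z)) := (hDz.tendsto u).comp hξt
      have hRHS : Tendsto (fun k => -(ε/τ' k) * ‖z‖) atTop (𝓝 (-(ε/τ) * ‖z‖)) :=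
        ((tendsto_const_nhds.div hτ't hτgt.ne').neg).mul_const ‖z‖
      exact le_of_tendsto_of_tendsto' hRHS hDξ hξ2
    refine ⟨u, huN, hJu, ?_⟩
    have hDb : ∀ z : H, |D u z| ≤ (ε/τ) * ‖z‖ := by
      intro z
      rw [abs_le]
      constructor
      · have := hclaim z
        linarith
      · have := hclaim (-z)
        rw [map_neg, norm_neg] at this
        linarith
    have hop : ‖D u‖ ≤ ε/τ := by
      apply ContinuousLinearMap.opNorm_le_bound _ (by positivity)
      intro z
      rw [Real.norm_eq_abs]
      exact hDb z
    have hfrac : ε/τ ≤ (5/(4*ρ)) * ε := by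
      have h1 : ε/τ ≤ ε/(4*ρ/5) :=
        div_le_div_of_nonneg_left hε.le (by positivity) hτlb
      have h2 : ε/(4*ρ/5) = (5/(4*ρ)) * ε := by
        field_simp
      linarith [h2 ▸ h1]
    linarith
  -- assemble the sequence
  have hseq : ∀ n : ℕ, ∃ u, u ∈ 𝒩 ∧ J u ≤ m + 1/((n:ℝ)+1) ∧
      ‖D u‖ ≤ (5/(4*ρ)) * (1/((n:ℝ)+1)) := fun n => hkey _ (by positivity)
  choose U hU1 hU2 hU3 using hseq
  refine ⟨hmpos, U, hU1, ?_, ?_, ?_⟩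
  · -- boundedness
    by_contra hb
    push_neg at hb
    have hsel : ∀ j : ℕ, ∃ n, (j:ℝ) < ‖U n‖ := fun j => hb j
    choose k hk using hsel
    have h4 := hJ4 (fun j => U (k j)) (fun j => hU1 _)
      (tendsto_atTop_mono (fun j => (hk j).le) tendsto_natCast_atTop_atTop)
    have hbound : ∀ j, J (U (k j)) ≤ m + 1 := by
      intro j
      have h5 : 1/((k j:ℝ)+1) ≤ 1 := by
        rw [div_le_one (by positivity)]
        linarith [Nat.cast_nonneg (α := ℝ) (k j)]
      exact (hU2 (k j)).trans (add_le_add_right h5 m)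
    obtain ⟨j, hj⟩ := (h4.eventually_gt_atTop (m+1)).exists
    exact absurd (hbound j) (not_le.mpr hj)
  · -- J tendsto m
    have hup : Tendsto (fun n : ℕ => m + 1/((n:ℝ)+1)) atTop (𝓝 m) := by
      have := tendsto_one_div_add_atTop_nhds_zero_nat.const_add m
      simpa using this
    exact tendsto_of_tendsto_of_tendsto_of_le_of_le tendsto_const_nhds hup
      (fun n => hmle _ (hU1 n)) hU2
  · -- derivative tendsto 0
    simp only [hfJ]
    apply squeeze_zero (fun n => norm_nonneg _) hU3
    have := tendsto_one_div_add_atTop_nhds_zero_nat.const_mul (5/(4*ρ))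
    simpa using this
end

section
/- Let 2 < q < ∞, let f : ℝ^N × ℝ → ℝ be measurable in x and continuous in u for a.e. x, with primitive F(x,u) = ∫₀^u f(x,s) ds, and suppose that for a.e. x the map u ↦ f(x,u)/|u|^q is strictly increasing on (−∞,0) and on (0,∞). Let Γ ∈ L^∞(ℝ^N) satisfy Γ(x) ≥ 0 for a.e. x. Let u : ℝ^N → ℝ be measurable, not a.e. zero, such that for every t > 0 the functions x ↦ f(x, t·u(x))·u(x), x ↦ F(x, t·u(x)) and x ↦ Γ(x)|u(x)|^q are integrable, and assume ∫_{ℝ^N} f(x,u)u dx − ∫_{ℝ^N} Γ(x)|u|^q dx > 0. Then for every t ∈ (0,∞) with t ≠ 1, ((t² − 1)/2)·(∫_{ℝ^N} f(x,u)u dx − ∫_{ℝ^N} Γ(x)|u|^q dx) − (∫_{ℝ^N} F(x,tu) dx − (t^q/q)∫_{ℝ^N} Γ(x)|u|^q dx) + (∫_{ℝ^N} F(x,u) dx − (1/q)∫_{ℝ^N} Γ(x)|u|^q dx) < 0. -/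
open MeasureTheory Set

/-- Cross-multiplied monotonicity of `τ ↦ g (τ*s) * s / τ^q`. -/
lemma core_mono (q : ℝ) (g : ℝ → ℝ)
    (hm1 : StrictMonoOn (fun v => g v / |v| ^ q) (Iio (0:ℝ)))
    (hm2 : StrictMonoOn (fun v => g v / |v| ^ q) (Ioi (0:ℝ)))
    (s : ℝ) {σ τ : ℝ} (hσ : 0 < σ) (hστ : σ ≤ τ) :
    τ ^ q * (g (σ * s) * s) ≤ σ ^ q * (g (τ * s) * s) := by
  have hτ0 : 0 < τ := lt_of_lt_of_le hσ hστ
  have hσq : 0 < σ ^ q := Real.rpow_pos_of_pos hσ q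
  have hτq : 0 < τ ^ q := Real.rpow_pos_of_pos hτ0 q
  set m : ℝ → ℝ := fun v => g v / |v| ^ q with hm
  rcases lt_trichotomy s 0 with hs | hs | hs
  · have hsq : 0 < |s| ^ q := Real.rpow_pos_of_pos (abs_pos.mpr hs.ne) q
    have hσs : σ * s < 0 := mul_neg_of_pos_of_neg hσ hs
    have hτs : τ * s < 0 := mul_neg_of_pos_of_neg hτ0 hs
    have hle : τ * s ≤ σ * s := mul_le_mul_of_nonpos_right hστ hs.le
    have hmle : m (τ * s) ≤ m (σ * s) := hm1.monotoneOn hτs hσs hle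
    have hgσ : g (σ * s) = m (σ * s) * (σ ^ q * |s| ^ q) := by
      have : |σ * s| ^ q = σ ^ q * |s| ^ q := by
        rw [abs_mul, abs_of_pos hσ, Real.mul_rpow hσ.le (abs_nonneg s)]
      rw [hm]
      field_simp [this]
      rw [this, eq_div_iff (mul_pos hσq hsq).ne']; ring
    have hgτ : g (τ * s) = m (τ * s) * (τ ^ q * |s| ^ q) := by
      have : |τ * s| ^ q = τ ^ q * |s| ^ q := by
        rw [abs_mul, abs_of_pos hτ0, Real.mul_rpow hτ0.le (abs_nonneg s)]
      rw [hm]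
      field_simp [this]
      rw [this, eq_div_iff (mul_pos hτq hsq).ne']; ring
    have hC : σ ^ q * τ ^ q * (|s| ^ q * s) ≤ 0 := by
      apply mul_nonpos_of_nonneg_of_nonpos (by positivity)
      exact mul_nonpos_of_nonneg_of_nonpos hsq.le hs.le
    calc τ ^ q * (g (σ * s) * s) = m (σ * s) * (σ ^ q * τ ^ q * (|s| ^ q * s)) := by
          rw [hgσ]; ring
      _ ≤ m (τ * s) * (σ ^ q * τ ^ q * (|s| ^ q * s)) :=
          mul_le_mul_of_nonpos_right hmle hC
      _ = σ ^ q * (g (τ * s) * s) := by rw [hgτ]; ring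
  · simp [hs]
  · have hsq : 0 < |s| ^ q := Real.rpow_pos_of_pos (abs_pos.mpr hs.ne') q
    have hσs : 0 < σ * s := mul_pos hσ hs
    have hτs : 0 < τ * s := mul_pos hτ0 hs
    have hle : σ * s ≤ τ * s := mul_le_mul_of_nonneg_right hστ hs.le
    have hmle : m (σ * s) ≤ m (τ * s) := hm2.monotoneOn hσs hτs hle
    have hgσ : g (σ * s) = m (σ * s) * (σ ^ q * |s| ^ q) := by
      have : |σ * s| ^ q = σ ^ q * |s| ^ q := by
        rw [abs_mul, abs_of_pos hσ, Real.mul_rpow hσ.le (abs_nonneg s)]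
      rw [hm]
      field_simp [this]
      rw [this]; ring
    have hgτ : g (τ * s) = m (τ * s) * (τ ^ q * |s| ^ q) := by
      have : |τ * s| ^ q = τ ^ q * |s| ^ q := by
        rw [abs_mul, abs_of_pos hτ0, Real.mul_rpow hτ0.le (abs_nonneg s)]
      rw [hm]
      field_simp [this]
      rw [this]; ring
    have hC : 0 ≤ σ ^ q * τ ^ q * (|s| ^ q * s) := by positivity
    calc τ ^ q * (g (σ * s) * s) = m (σ * s) * (σ ^ q * τ ^ q * (|s| ^ q * s)) := by
          rw [hgσ]; ring
      _ ≤ m (τ * s) * (σ ^ q * τ ^ q * (|s| ^ q * s)) :=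
          mul_le_mul_of_nonneg_right hmle hC
      _ = σ ^ q * (g (τ * s) * s) := by rw [hgτ]; ring

/-- Pointwise key inequality in integral form. -/
lemma key_pt (q : ℝ) (hq : 2 < q) (g : ℝ → ℝ) (hg : Continuous g)
    (hm1 : StrictMonoOn (fun v => g v / |v| ^ q) (Iio (0:ℝ)))
    (hm2 : StrictMonoOn (fun v => g v / |v| ^ q) (Ioi (0:ℝ)))
    (γ : ℝ) (hγ : 0 ≤ γ) (s : ℝ) {t : ℝ} (ht : 0 < t) :
    (t ^ 2 - 1) / 2 * (g s * s - γ * |s| ^ q)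
      - ((∫ v in (0:ℝ)..(t * s), g v) - ∫ v in (0:ℝ)..s, g v)
      + (t ^ q - 1) / q * (γ * |s| ^ q)
    ≤ ((t ^ 2 - 1) / 2 - (t ^ (q + 1) - 1) / (q + 1)) * (g s * s - γ * |s| ^ q) := by
  have hq0 : (0:ℝ) < q := by linarith
  set a : ℝ := g s * s - γ * |s| ^ q with ha
  set G : ℝ := γ * |s| ^ q with hG
  have hG0 : 0 ≤ G := mul_nonneg hγ (Real.rpow_nonneg (abs_nonneg s) q)
  -- continuity facts
  have hc1 : Continuous fun τ : ℝ => τ * a := continuous_id.mul continuous_const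
  have hc2 : Continuous fun τ : ℝ => g (τ * s) * s :=
    (hg.comp (continuous_id.mul continuous_const)).mul continuous_const
  have hc3 : Continuous fun τ : ℝ => τ ^ (q - 1) * G :=
    (Real.continuous_rpow_const (by linarith)).mul continuous_const
  have hc4 : Continuous fun τ : ℝ => (τ - τ ^ q) * a :=
    (continuous_id.sub (Real.continuous_rpow_const (by linarith))).mul continuous_const
  have i1 : IntervalIntegrable _ MeasureTheory.volume (1:ℝ) t := hc1.intervalIntegrable (1:ℝ) t
  have i2 : IntervalIntegrable _ MeasureTheory.volume (1:ℝ) t := hc2.intervalIntegrable (1:ℝ) t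
  have i3 : IntervalIntegrable _ MeasureTheory.volume (1:ℝ) t := hc3.intervalIntegrable (1:ℝ) t
  have i4 : IntervalIntegrable _ MeasureTheory.volume (1:ℝ) t := hc4.intervalIntegrable (1:ℝ) t
  -- closed forms
  have E1 : ∫ τ in (1:ℝ)..t, τ * a = (t ^ 2 - 1) / 2 * a := by
    rw [intervalIntegral.integral_mul_const, integral_id]; norm_num
  have E2 : ∫ τ in (1:ℝ)..t, τ ^ (q - 1) * G = (t ^ q - 1) / q * G := by
    rw [intervalIntegral.integral_mul_const, integral_rpow (Or.inl (by linarith))]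
    have hq1 : q - 1 + 1 = q := by ring
    rw [hq1, Real.one_rpow]
  have E3 : ∫ τ in (1:ℝ)..t, g (τ * s) * s
      = (∫ v in (0:ℝ)..(t * s), g v) - ∫ v in (0:ℝ)..s, g v := by
    have hsub := intervalIntegral.integral_comp_smul_deriv
      (a := (1:ℝ)) (b := t) (f := fun τ => τ * s) (f' := fun _ => s) (g := g)
      (fun τ _ => hasDerivAt_mul_const s) continuousOn_const hg
    simp only [Function.comp, smul_eq_mul, one_mul] at hsub
    have : ∫ τ in (1:ℝ)..t, g (τ * s) * s = ∫ τ in (1:ℝ)..t, s * g (τ * s) := by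
      congr 1; ext τ; ring
    rw [this, hsub,
      ← intervalIntegral.integral_interval_sub_left
        (hg.intervalIntegrable 0 (t * s)) (hg.intervalIntegrable 0 s)]
  have E4 : ∫ τ in (1:ℝ)..t, (τ - τ ^ q) * a
      = ((t ^ 2 - 1) / 2 - (t ^ (q + 1) - 1) / (q + 1)) * a := by
    rw [intervalIntegral.integral_mul_const,
      intervalIntegral.integral_sub (continuous_id'.intervalIntegrable 1 t)
        ((Real.continuous_rpow_const hq0.le).intervalIntegrable 1 t),
      integral_id, integral_rpow (Or.inl (by linarith)), Real.one_rpow]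
    norm_num
  have L : (t ^ 2 - 1) / 2 * a - ((∫ v in (0:ℝ)..(t * s), g v) - ∫ v in (0:ℝ)..s, g v)
      + (t ^ q - 1) / q * G
      = ∫ τ in (1:ℝ)..t, (τ * a - g (τ * s) * s + τ ^ (q - 1) * G) := by
    rw [intervalIntegral.integral_add (i1.sub i2) i3, intervalIntegral.integral_sub i1 i2,
      E1, E2, E3]
  rw [L, ← E4]
  -- pointwise comparison
  rcases lt_trichotomy t 1 with ht1 | ht1 | ht1
  · rw [intervalIntegral.integral_symm (μ := MeasureTheory.volume) t 1, intervalIntegral.integral_symm (μ := MeasureTheory.volume) t 1]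
    have : ∫ τ in t..(1:ℝ), (τ - τ ^ q) * a
        ≤ ∫ τ in t..(1:ℝ), (τ * a - g (τ * s) * s + τ ^ (q - 1) * G) := by
      apply intervalIntegral.integral_mono_on ht1.le (hc4.intervalIntegrable t 1)
        (((hc1.sub hc2).add hc3).intervalIntegrable t 1)
      intro τ hτ
      have hτ0 : 0 < τ := lt_of_lt_of_le ht hτ.1
      have hτ1 : τ ≤ 1 := hτ.2
      have h1 : g (τ * s) * s ≤ τ ^ q * (g s * s) := by
        have := core_mono q g hm1 hm2 s hτ0 hτ1
        simpa [Real.one_rpow] using this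
      have h2 : τ ^ q * G ≤ τ ^ (q - 1) * G :=
        mul_le_mul_of_nonneg_right
          (Real.rpow_le_rpow_of_exponent_ge hτ0 hτ1 (by linarith)) hG0
      have h3 : τ ^ q * a = τ ^ q * (g s * s) - τ ^ q * G := by rw [ha, hG, mul_sub]
      show (τ - τ ^ q) * a ≤ τ * a - g (τ * s) * s + τ ^ (q - 1) * G
      linarith
    linarith
  · subst ht1; simp
  · apply intervalIntegral.integral_mono_on ht1.le ((i1.sub i2).add i3) i4
    intro τ hτ
    have hτ1 : 1 ≤ τ := hτ.1
    have h1 : τ ^ q * (g s * s) ≤ g (τ * s) * s := by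
      have := core_mono q g hm1 hm2 s one_pos hτ1
      simpa [Real.one_rpow] using this
    have h2 : τ ^ (q - 1) * G ≤ τ ^ q * G :=
      mul_le_mul_of_nonneg_right
        (Real.rpow_le_rpow_of_exponent_le hτ1 (by linarith)) hG0
    have h3 : τ ^ q * a = τ ^ q * (g s * s) - τ ^ q * G := by rw [ha, hG, mul_sub]
    linarith

lemma c_neg (q t : ℝ) (hq : 2 < q) (ht : 0 < t) (ht1 : t ≠ 1) :
    (t ^ 2 - 1) / 2 - (t ^ (q + 1) - 1) / (q + 1) < 0 := by
  have hE : ∫ τ in (1:ℝ)..t, (τ - τ ^ q)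
      = (t ^ 2 - 1) / 2 - (t ^ (q + 1) - 1) / (q + 1) := by
    rw [intervalIntegral.integral_sub (continuous_id'.intervalIntegrable 1 t)
        ((Real.continuous_rpow_const (by linarith)).intervalIntegrable 1 t),
      integral_id, integral_rpow (Or.inl (by linarith)), Real.one_rpow]
    norm_num
  have hcont : ContinuousOn (fun τ : ℝ => τ - τ ^ q) (Icc (min t 1) (max t 1)) :=
    (continuous_id'.sub (Real.continuous_rpow_const (by linarith))).continuousOn
  rcases lt_or_gt_of_ne ht1 with h | h
  · rw [← hE, intervalIntegral.integral_symm (μ := MeasureTheory.volume) t 1, neg_lt, neg_zero]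
    have key := intervalIntegral.integral_lt_integral_of_continuousOn_of_le_of_exists_lt
      (f := fun _ : ℝ => (0:ℝ)) (g := fun τ => τ - τ ^ q) h
      continuousOn_const
      (by simpa [min_eq_left h.le, max_eq_right h.le] using hcont)
      (fun τ hτ => by
        have hτ0 : 0 < τ := lt_trans ht hτ.1
        have h2 : τ ^ q ≤ τ ^ (1:ℝ) :=
          Real.rpow_le_rpow_of_exponent_ge hτ0 hτ.2 (by linarith)
        rw [Real.rpow_one] at h2
        simpa using sub_nonneg.2 h2)
      ⟨t, ⟨le_refl t, h.le⟩, by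
        have h2 : t ^ q < t ^ (1:ℝ) :=
          Real.rpow_lt_rpow_of_exponent_gt ht h (by linarith)
        rw [Real.rpow_one] at h2
        simpa using sub_pos.2 h2⟩
    simpa using key
  · rw [← hE]
    have key := intervalIntegral.integral_lt_integral_of_continuousOn_of_le_of_exists_lt
      (f := fun τ : ℝ => τ - τ ^ q) (g := fun _ => (0:ℝ)) h
      (by simpa [min_eq_right h.le, max_eq_left h.le] using hcont)
      continuousOn_const
      (fun τ hτ => by
        have hτ1 : 1 ≤ τ := hτ.1.le
        have h2 : τ ^ (1:ℝ) ≤ τ ^ q :=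
          Real.rpow_le_rpow_of_exponent_le hτ1 (by linarith)
        rw [Real.rpow_one] at h2
        simpa using sub_nonpos.2 h2)
      ⟨t, ⟨h.le, le_refl t⟩, by
        have h2 : t ^ (1:ℝ) < t ^ q :=
          Real.rpow_lt_rpow_of_exponent_lt h (by linarith)
        rw [Real.rpow_one] at h2
        simpa using sub_neg.2 h2⟩
    simpa using key

/-- Condition (J3) for the concrete functional
`I(u) = ∫ (F(x,u) - (1/q) Γ(x) |u|^q) dx`. -/
theorem concrete_J3
    {N : ℕ} (q : ℝ) (hq : 2 < q)
    (f : (Fin N → ℝ) → ℝ → ℝ)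
    (hf_meas : ∀ s : ℝ, Measurable fun x => f x s)
    (hf_cont : ∀ᵐ x : Fin N → ℝ, Continuous fun s => f x s)
    (hf_mono : ∀ᵐ x : Fin N → ℝ,
      StrictMonoOn (fun s => f x s / |s| ^ q) (Iio (0 : ℝ)) ∧
      StrictMonoOn (fun s => f x s / |s| ^ q) (Ioi (0 : ℝ)))
    (Γ : (Fin N → ℝ) → ℝ) (hΓ_meas : Measurable Γ)
    (hΓ_bdd : ∃ C : ℝ, ∀ᵐ x : Fin N → ℝ, |Γ x| ≤ C)
    (hΓ_pos : ∀ᵐ x : Fin N → ℝ, 0 ≤ Γ x)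
    (u : (Fin N → ℝ) → ℝ) (hu_meas : Measurable u)
    (hu_ne : ¬ (u =ᵐ[volume] (0 : (Fin N → ℝ) → ℝ)))
    (h_int_fu : ∀ t : ℝ, 0 < t → Integrable (fun x => f x (t * u x) * u x))
    (h_int_F : ∀ t : ℝ, 0 < t →
      Integrable (fun x => ∫ s in (0 : ℝ)..(t * u x), f x s))
    (h_int_Γ : Integrable (fun x => Γ x * |u x| ^ q))
    (h_pos : 0 < (∫ x, f x (u x) * u x) - ∫ x, Γ x * |u x| ^ q) :
    ∀ t : ℝ, 0 < t → t ≠ 1 →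
      (t ^ 2 - 1) / 2 * ((∫ x, f x (u x) * u x) - ∫ x, Γ x * |u x| ^ q)
        - ((∫ x, ∫ s in (0 : ℝ)..(t * u x), f x s)
            - t ^ q / q * ∫ x, Γ x * |u x| ^ q)
        + ((∫ x, ∫ s in (0 : ℝ)..(u x), f x s)
            - 1 / q * ∫ x, Γ x * |u x| ^ q) < 0 := by
  intro t ht ht1
  have hfu : Integrable (fun x => f x (u x) * u x) := by
    simpa using h_int_fu 1 one_pos
  have hF1 : Integrable (fun x => ∫ s in (0:ℝ)..(u x), f x s) := by
    simpa using h_int_F 1 one_pos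
  have hFt := h_int_F t ht
  set c : ℝ := (t ^ 2 - 1) / 2 - (t ^ (q + 1) - 1) / (q + 1) with hc
  -- the pointwise function
  set φ : (Fin N → ℝ) → ℝ := fun x =>
    (t ^ 2 - 1) / 2 * (f x (u x) * u x - Γ x * |u x| ^ q)
      - ((∫ s in (0:ℝ)..(t * u x), f x s) - ∫ s in (0:ℝ)..(u x), f x s)
      + (t ^ q - 1) / q * (Γ x * |u x| ^ q) with hφ
  set ψ : (Fin N → ℝ) → ℝ := fun x =>
    c * (f x (u x) * u x - Γ x * |u x| ^ q) with hψ
  have hφint : Integrable φ :=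
    (((hfu.sub h_int_Γ).const_mul ((t ^ 2 - 1) / 2)).sub (hFt.sub hF1)).add
      (h_int_Γ.const_mul ((t ^ q - 1) / q))
  have hψint : Integrable ψ := (hfu.sub h_int_Γ).const_mul c
  have hae : ∀ᵐ x, φ x ≤ ψ x := by
    filter_upwards [hf_cont, hf_mono, hΓ_pos] with x hcx hmx hΓx
    exact key_pt q hq (f x) hcx hmx.1 hmx.2 (Γ x) hΓx (u x) ht
  have hle : ∫ x, φ x ≤ ∫ x, ψ x := integral_mono_ae hφint hψint hae
  have hψeq : ∫ x, ψ x
      = c * ((∫ x, f x (u x) * u x) - ∫ x, Γ x * |u x| ^ q) := by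
    simp only [hψ]
    rw [integral_const_mul, integral_sub hfu h_int_Γ]
  have hφeq : ∫ x, φ x
      = (t ^ 2 - 1) / 2 * ((∫ x, f x (u x) * u x) - ∫ x, Γ x * |u x| ^ q)
        - ((∫ x, ∫ s in (0:ℝ)..(t * u x), f x s)
            - ∫ x, ∫ s in (0:ℝ)..(u x), f x s)
        + (t ^ q - 1) / q * ∫ x, Γ x * |u x| ^ q := by
    have hint1 : Integrable (fun x => (t ^ 2 - 1) / 2 * (f x (u x) * u x - Γ x * |u x| ^ q))
        volume := (hfu.sub h_int_Γ).const_mul _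
    have hint2 : Integrable (fun x =>
        (∫ s in (0:ℝ)..(t * u x), f x s) - ∫ s in (0:ℝ)..(u x), f x s) volume := hFt.sub hF1
    have hint3 : Integrable (fun x => (t ^ q - 1) / q * (Γ x * |u x| ^ q)) volume :=
      h_int_Γ.const_mul _
    have hint12 : Integrable (fun x =>
        (t ^ 2 - 1) / 2 * (f x (u x) * u x - Γ x * |u x| ^ q)
          - ((∫ s in (0:ℝ)..(t * u x), f x s) - ∫ s in (0:ℝ)..(u x), f x s)) volume :=
      hint1.sub hint2
    simp only [hφ]
    rw [integral_add hint12 hint3, integral_sub hint1 hint2,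
      integral_sub hFt hF1, integral_const_mul, integral_const_mul,
      integral_sub hfu h_int_Γ]
  have hneg : ∫ x, φ x < 0 := by
    rw [hψeq] at hle
    exact lt_of_le_of_lt hle (mul_neg_of_neg_of_pos (c_neg q t hq ht ht1) h_pos)
  have hgoal : (t ^ 2 - 1) / 2 * ((∫ x, f x (u x) * u x) - ∫ x, Γ x * |u x| ^ q)
        - ((∫ x, ∫ s in (0 : ℝ)..(t * u x), f x s)
            - t ^ q / q * ∫ x, Γ x * |u x| ^ q)
        + ((∫ x, ∫ s in (0 : ℝ)..(u x), f x s)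
            - 1 / q * ∫ x, Γ x * |u x| ^ q) = ∫ x, φ x := by
    rw [hφeq]; ring
  rw [hgoal]; exact hneg
end

section
/- Let q > 0 and let f : ℝ → ℝ be continuous with f(0) = 0, and suppose the map s ↦ f(s)/s^{q−1} is nondecreasing on (0,∞). Then for every u ≥ 0 one has f(u)·u ≥ q·∫₀^u f(s) ds. -/
open Set intervalIntegral

/-! Monotonicity of `f s / s ^ (q - 1)` gives `f s ≤ c s ^ (q - 1)` on `(0, u]` with
`c = f u / u ^ (q - 1)`; integrating, `∫₀ᵘ f ≤ c u ^ q / q = f u · u / q`. -/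

theorem le_div_rpow_mul_rpow_of_monotoneOn {f : ℝ → ℝ} {p s u : ℝ}
    (hmono : MonotoneOn (fun s => f s / s ^ p) (Ioi 0)) (hs : 0 < s) (hsu : s ≤ u) :
    f s ≤ f u / u ^ p * s ^ p := by
  have hratio : f s / s ^ p ≤ f u / u ^ p := hmono hs (hs.trans_le hsu) hsu
  rwa [div_le_iff₀ (Real.rpow_pos_of_pos hs p)] at hratio

theorem integral_rpow_sub_one {q : ℝ} (hq : 0 < q) (u : ℝ) :
    ∫ s in (0 : ℝ)..u, s ^ (q - 1) = u ^ q / q := by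
  rw [integral_rpow (Or.inl (by linarith)), sub_add_cancel, Real.zero_rpow hq.ne', sub_zero]

theorem mul_ge_q_mul_primitive_general
    (q : ℝ) (hq : 0 < q)
    (f : ℝ → ℝ) (hf : Continuous f)
    (hmono : MonotoneOn (fun s => f s / s ^ (q - 1)) (Ioi (0 : ℝ))) :
    ∀ u : ℝ, 0 ≤ u → f u * u ≥ q * ∫ s in (0 : ℝ)..u, f s := by
  intro u hu
  rcases hu.eq_or_lt with rfl | hu_pos
  · simp
  have hbound :
      ∫ s in (0 : ℝ)..u, f s ≤ ∫ s in (0 : ℝ)..u, f u / u ^ (q - 1) * s ^ (q - 1) :=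
    integral_mono_on_of_le_Ioo hu (hf.intervalIntegrable _ _)
      ((intervalIntegrable_rpow' (by linarith)).const_mul _)
      fun s hs => le_div_rpow_mul_rpow_of_monotoneOn hmono hs.1 hs.2.le
  calc q * ∫ s in (0 : ℝ)..u, f s
      ≤ q * ∫ s in (0 : ℝ)..u, f u / u ^ (q - 1) * s ^ (q - 1) :=
        mul_le_mul_of_nonneg_left hbound hq.le
    _ = f u / u ^ (q - 1) * u ^ q := by
        rw [integral_const_mul, integral_rpow_sub_one hq]; field_simp
    _ = f u * u := by rw [Real.rpow_sub_one hu_pos.ne']; field_simp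

/-- If `s ↦ f(s)/s^(q-1)` is nondecreasing on `(0,∞)`, then `f(u)·u ≥ q·∫₀ᵘ f(s) ds`. -/
theorem mul_ge_q_mul_primitive
    (q : ℝ) (hq : 0 < q)
    (f : ℝ → ℝ) (hf : Continuous f) (hf0 : f 0 = 0)
    (hmono : MonotoneOn (fun s => f s / s ^ (q - 1)) (Ioi (0 : ℝ))) :
    ∀ u : ℝ, 0 ≤ u → f u * u ≥ q * ∫ s in (0 : ℝ)..u, f s :=
  mul_ge_q_mul_primitive_general q hq f hf hmono
end
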